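/- (Convergence of the adaptive routine FIXPT.) Suppose ‖l̄‖ < c²/(4‖T‖³‖A₁‖); let r* with 0 < r* < c/(2‖T‖³‖A₁‖), set L := 2 r* ‖T‖³ ‖A₁‖ / c (so 0 < L < 1), and let ū be the unique element of (ker T)⊥ with ‖ū‖ ≤ r* and G ū + G₁(ū) = l̄. Let ε₀ satisfy 0 < ε₀ < r*, ε₀ < 1 and ε₀ ≠ L, and set ε_k := ε₀ᵏ for k ≥ 1 (with the value ε₀ understood at k = 0). Let (v_n)_{n≥0} be a sequence in H with v₀ = 0 such that, for every n ≥ 0, the unique element h_n ∈ (ker T)⊥ with G h_n = l̄ − G₁(v_n) satisfies ‖P v_{n+1} − h_n‖ ≤ ε_{n+1}, and assume ℰ_n ≤ r* for all n, where ℰ_n := Σ_{k=2}^{n+1} ε_k + (1+L)·Σ_{h=0}^{n−3} Σ_{k=3}^{n−h} ε_k·L^{n−h−k} + (ε₁ + L·(ε₀ + ‖l̄‖/c))·Σ_{k=0}^{n−1} Lᵏ + ε₀ + ‖l̄‖/c (sums over empty index ranges being zero). Then for every n ≥ 0 one has ‖P v_{n+1} − ū‖ ≤ ε₀·(ε₀^{n+1}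 − L^{n+1})/(ε₀ − L) + Lⁿ·r*, and the sequence (P v_n) converges in H to ū. -/

import Mathlib

/-!
For `u` in the ball of radius `r*`, let `h(u) ∈ (ker T)ᗮ` solve the linear problem
`G h = l̄ - G₁ u`; it exists by Lax–Milgram for `B` and surjectivity of `T`. Since `G₁` is
quadratic with constant `‖T‖³‖A₁‖` and `G` is bounded below by `c` on `(ker T)ᗮ`, the map
`u ↦ h(u)` is `L`-Lipschitz on the ball and maps it into the ball of radius
`‖l̄‖/c + L r*/2`. Letting `n → ∞` in `ℰ_n ≤ r*` gives `ε₀ + ‖l̄‖/c ≤ (1 - L) r*`, so the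
inexact iterates `P v_n` stay in the ball, and there their errors obey
`e_{n+1} ≤ ε₀^{n+1} + L e_n`, which unrolls to the stated geometric bound.
-/

open scoped RealInnerProductSpace
open Filter Topology

-- The paper's `ℰ_n`, with `d = ‖l̄‖ / c`.
open Finset in
def fixptBudget (ε : ℕ → ℝ) (L d : ℝ) (n : ℕ) : ℝ :=
  (∑ k ∈ Icc 2 (n + 1), ε k) +
    (1 + L) * (∑ h ∈ range (n - 2), ∑ k ∈ Icc 3 (n - h), ε k * L ^ (n - h - k)) +
    (ε 1 + L * (ε 0 + d)) * (∑ k ∈ range n, L ^ k) + ε 0 + d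

open Finset in
theorem mul_geom_sum_le_fixptBudget {ε : ℕ → ℝ} {L : ℝ} (d : ℝ) (hε : ∀ k, 0 ≤ ε k)
    (hL : 0 ≤ L) (n : ℕ) :
    (ε 0 + d) * ∑ k ∈ range (n + 1), L ^ k ≤ fixptBudget ε L d n := by
  have hS : 0 ≤ ∑ k ∈ range n, L ^ k := sum_nonneg fun k _ => pow_nonneg hL k
  have hfirst : 0 ≤ ∑ k ∈ Icc 2 (n + 1), ε k := sum_nonneg fun k _ => hε k
  have hsecond : 0 ≤ ∑ h ∈ range (n - 2), ∑ k ∈ Icc 3 (n - h), ε k * L ^ (n - h - k) :=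
    sum_nonneg fun _ _ => sum_nonneg fun k _ => mul_nonneg (hε k) (pow_nonneg hL _)
  rw [geom_sum_succ, fixptBudget]
  nlinarith [mul_nonneg (hε 1) hS]

theorem le_one_sub_mul_of_forall_mul_geom_sum_le {D L r : ℝ} (hL0 : 0 ≤ L) (hL1 : L < 1)
    (h : ∀ n, D * ∑ k ∈ Finset.range (n + 1), L ^ k ≤ r) : D ≤ (1 - L) * r := by
  have hlim : Tendsto (fun n => D * ∑ k ∈ Finset.range (n + 1), L ^ k) atTop
      (𝓝 (D * (1 - L)⁻¹)) :=
    (((hasSum_geometric_of_lt_one hL0 hL1).tendsto_sum_nat).comp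
      (tendsto_add_atTop_nat 1)).const_mul D
  have := le_of_tendsto' hlim h
  rwa [← div_eq_mul_inv, div_le_iff₀ (sub_pos.2 hL1), mul_comm] at this

theorem div_mem_Ioo_of_lt_div {c r K : ℝ} (hc : 0 < c) (hr : 0 < r) (h : r < c / K) :
    r * K / c ∈ Set.Ioo 0 1 := by
  have hK : 0 < K := ((div_pos_iff.1 (hr.trans h)).resolve_right fun h' => hc.not_gt h'.1).2
  exact ⟨by positivity, (div_lt_one hc).2 ((lt_div_iff₀ hK).1 h)⟩

theorem le_of_le_pow_add_mul {e : ℕ → ℝ} {a L r : ℝ} (haL : a ≠ L) (hL : 0 ≤ L)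
    (h0 : e 0 ≤ r) (hrec : ∀ n, e (n + 1) ≤ a ^ (n + 1) + L * e n) (n : ℕ) :
    e n ≤ a * (a ^ n - L ^ n) / (a - L) + L ^ n * r := by
  induction n with
  | zero => simpa using h0
  | succ n ih =>
    have hsub : a - L ≠ 0 := sub_ne_zero.2 haL
    calc e (n + 1) ≤ a ^ (n + 1) + L * (a * (a ^ n - L ^ n) / (a - L) + L ^ n * r) :=
          (hrec n).trans (by gcongr)
      _ = a * (a ^ (n + 1) - L ^ (n + 1)) / (a - L) + L ^ (n + 1) * r := by
          field_simp
          ring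

theorem tendsto_geom_error_bound {a L : ℝ} (r : ℝ) (ha0 : 0 ≤ a) (ha1 : a < 1) (hL0 : 0 ≤ L)
    (hL1 : L < 1) :
    Tendsto (fun n : ℕ => a * (a ^ n - L ^ n) / (a - L) + L ^ n * r) atTop (𝓝 0) := by
  have ha := tendsto_pow_atTop_nhds_zero_of_lt_one ha0 ha1
  have hL := tendsto_pow_atTop_nhds_zero_of_lt_one hL0 hL1
  simpa using (((ha.sub hL).const_mul a).div_const (a - L)).add (hL.mul_const r)

theorem ContinuousLinearMap.norm_apply_diag_sub_le {E F : Type*} [SeminormedAddCommGroup E]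
    [NormedSpace ℝ E] [SeminormedAddCommGroup F] [NormedSpace ℝ F]
    (A : E →L[ℝ] E →L[ℝ] F) (x y : E) :
    ‖A x x - A y y‖ ≤ ‖A‖ * ((‖x‖ + ‖y‖) * ‖x - y‖) := by
  have hsplit : A x x - A y y = A (x - y) x + A y (x - y) := by
    simp only [map_sub, sub_apply]
    abel
  calc ‖A x x - A y y‖ ≤ ‖A (x - y) x‖ + ‖A y (x - y)‖ := hsplit ▸ norm_add_le _ _
    _ ≤ ‖A‖ * ‖x - y‖ * ‖x‖ + ‖A‖ * ‖y‖ * ‖x - y‖ :=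
        add_le_add (A.le_opNorm₂ _ _) (A.le_opNorm₂ _ _)
    _ = ‖A‖ * ((‖x‖ + ‖y‖) * ‖x - y‖) := by ring

theorem ContinuousLinearMap.norm_adjoint_apply_diag_sub_le {H V : Type*}
    [NormedAddCommGroup H] [InnerProductSpace ℝ H] [CompleteSpace H]
    [NormedAddCommGroup V] [InnerProductSpace ℝ V] [CompleteSpace V]
    (T : H →L[ℝ] V) (A : V →L[ℝ] V →L[ℝ] V) (w w' : H) :
    ‖adjoint T (A (T w) (T w)) - adjoint T (A (T w') (T w'))‖ ≤
      ‖T‖ ^ 3 * ‖A‖ * ((‖w‖ + ‖w'‖) * ‖w - w'‖) := by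
  rw [← map_sub]
  calc ‖adjoint T (A (T w) (T w) - A (T w') (T w'))‖
      ≤ ‖T‖ * (‖A‖ * ((‖T w‖ + ‖T w'‖) * ‖T (w - w')‖)) := by
        rw [map_sub T]
        exact ((adjoint T).le_opNorm _).trans
          (by rw [LinearIsometryEquiv.norm_map]; gcongr; exact A.norm_apply_diag_sub_le _ _)
    _ ≤ ‖T‖ * (‖A‖ * ((‖T‖ * ‖w‖ + ‖T‖ * ‖w'‖) * (‖T‖ * ‖w - w'‖))) := by
        gcongr <;> exact T.le_opNorm _
    _ = ‖T‖ ^ 3 * ‖A‖ * ((‖w‖ + ‖w'‖) * ‖w - w'‖) := by ring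

section Solvability

variable {V H : Type*} [NormedAddCommGroup V] [InnerProductSpace ℝ V]
  [NormedAddCommGroup H] [InnerProductSpace ℝ H] [CompleteSpace H]

theorem ContinuousLinearMap.surjective_of_coercive [CompleteSpace V] (B : V →L[ℝ] V) {α : ℝ}
    (hα : 0 < α) (hB : ∀ v, α * ‖v‖ ^ 2 ≤ ⟪B v, v⟫) : Function.Surjective B := by
  have hcoer : IsCoercive ((innerSL ℝ).comp B) :=
    ⟨α, hα, fun u => by simpa [sq, mul_assoc] using hB u⟩
  have hsharp : InnerProductSpace.continuousLinearMapOfBilin ((innerSL ℝ).comp B) = B := by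
    ext w
    refine ext_inner_right ℝ fun z => ?_
    simp [InnerProductSpace.continuousLinearMapOfBilin_apply]
  simpa [hsharp, LinearMap.range_eq_top] using hcoer.range_eq_top

theorem ContinuousLinearMap.exists_mem_orthogonal_ker_apply_eq (T : H →L[ℝ] V)
    (hT : Function.Surjective T) (z : V) :
    ∃ x ∈ (LinearMap.ker (T : H →ₗ[ℝ] V))ᗮ, T x = z := by
  have : CompleteSpace (LinearMap.ker (T : H →ₗ[ℝ] V)) := T.isClosed_ker.completeSpace_coe
  obtain ⟨x, rfl⟩ := hT z
  obtain ⟨y, hy, w, hw, rfl⟩ :=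
    Submodule.exists_add_mem_mem_orthogonal (K := LinearMap.ker (T : H →ₗ[ℝ] V)) x
  exact ⟨w, hw, by simp_all⟩

theorem exists_mem_orthogonal_ker_adjoint_comp_apply_eq [CompleteSpace V] {B : V →L[ℝ] V}
    {α : ℝ} (hα : 0 < α) (hB : ∀ v, α * ‖v‖ ^ 2 ≤ ⟪B v, v⟫) {T : H →L[ℝ] V}
    (hT : Function.Surjective T) {y : H}
    (hy : y ∈ LinearMap.range (ContinuousLinearMap.adjoint T : V →ₗ[ℝ] H)) :
    ∃ h ∈ (LinearMap.ker (T : H →ₗ[ℝ] V))ᗮ,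
      (ContinuousLinearMap.adjoint T).comp (B.comp T) h = y := by
  obtain ⟨w, rfl⟩ := hy
  obtain ⟨z, rfl⟩ := B.surjective_of_coercive hα hB w
  obtain ⟨h, hh, rfl⟩ := T.exists_mem_orthogonal_ker_apply_eq hT z
  exact ⟨h, hh, rfl⟩

end Solvability

section InexactIteration

variable {H : Type*} [NormedAddCommGroup H] [NormedSpace ℝ H]
  {G : H →L[ℝ] H} {K : Submodule ℝ H} {Q : H → H} {l : H} {c M L r : ℝ}

theorem norm_le_of_apply_eq_sub (hc : 0 < c) (hcG : ∀ x ∈ K, c * ‖x‖ ≤ ‖G x‖)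
    (hQ : ∀ w w', ‖Q w - Q w'‖ ≤ M * ((‖w‖ + ‖w'‖) * ‖w - w'‖)) (hQ0 : Q 0 = 0)
    (hM : 0 ≤ M) (hML : 2 * r * M ≤ L * c) {u h : H} (hu : ‖u‖ ≤ r) (hh : h ∈ K)
    (hGh : G h = l - Q u) : ‖h‖ ≤ ‖l‖ / c + L * r / 2 := by
  have hQu : ‖Q u‖ ≤ M * ‖u‖ ^ 2 := by simpa [hQ0, sq] using hQ u 0
  have hr : 0 ≤ r := (norm_nonneg u).trans hu
  rw [← mul_le_mul_iff_right₀ hc, mul_add, mul_div_cancel₀ _ hc.ne']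
  calc c * ‖h‖ ≤ ‖l - Q u‖ := hGh ▸ hcG h hh
    _ ≤ ‖l‖ + M * ‖u‖ ^ 2 := (norm_sub_le _ _).trans (by gcongr)
    _ ≤ ‖l‖ + M * r ^ 2 := by gcongr
    _ ≤ ‖l‖ + c * (L * r / 2) := by nlinarith [mul_le_mul_of_nonneg_left hML hr]

theorem norm_sub_le_of_apply_eq_sub (hc : 0 < c) (hcG : ∀ x ∈ K, c * ‖x‖ ≤ ‖G x‖)
    (hQ : ∀ w w', ‖Q w - Q w'‖ ≤ M * ((‖w‖ + ‖w'‖) * ‖w - w'‖))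
    (hM : 0 ≤ M) (hML : 2 * r * M ≤ L * c) {u u' h h' : H} (hu : ‖u‖ ≤ r) (hu' : ‖u'‖ ≤ r)
    (hh : h ∈ K) (hh' : h' ∈ K) (hGh : G h = l - Q u) (hGh' : G h' = l - Q u') :
    ‖h - h'‖ ≤ L * ‖u - u'‖ := by
  rw [← mul_le_mul_iff_right₀ hc]
  calc c * ‖h - h'‖ ≤ ‖Q u' - Q u‖ := by
        simpa [hGh, hGh'] using hcG _ (K.sub_mem hh hh')
    _ ≤ M * ((r + r) * ‖u - u'‖) := by
        rw [norm_sub_rev u]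
        exact (hQ u' u).trans (by gcongr)
    _ ≤ c * (L * ‖u - u'‖) := by nlinarith [norm_nonneg (u - u')]

theorem norm_iterate_le (hc : 0 < c) (hcG : ∀ x ∈ K, c * ‖x‖ ≤ ‖G x‖)
    (hQ : ∀ w w', ‖Q w - Q w'‖ ≤ M * ((‖w‖ + ‖w'‖) * ‖w - w'‖)) (hQ0 : Q 0 = 0)
    (hM : 0 ≤ M) (hML : 2 * r * M ≤ L * c) {u h : ℕ → H} {δ : ℕ → ℝ}
    (hsol : ∀ n, h n ∈ K ∧ G (h n) = l - Q (u n)) (hstep : ∀ n, ‖u (n + 1) - h n‖ ≤ δ (n + 1))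
    (hu0 : ‖u 0‖ ≤ r) (hδ : ∀ n, δ (n + 1) + ‖l‖ / c + L * r / 2 ≤ r) (n : ℕ) :
    ‖u n‖ ≤ r := by
  induction n with
  | zero => exact hu0
  | succ n ih =>
    have hh := norm_le_of_apply_eq_sub hc hcG hQ hQ0 hM hML ih (hsol n).1 (hsol n).2
    calc ‖u (n + 1)‖ ≤ ‖u (n + 1) - h n‖ + ‖h n‖ := norm_le_norm_sub_add _ _
      _ ≤ r := by linarith [hstep n, hδ n]

theorem norm_iterate_sub_le (hc : 0 < c) (hcG : ∀ x ∈ K, c * ‖x‖ ≤ ‖G x‖)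
    (hQ : ∀ w w', ‖Q w - Q w'‖ ≤ M * ((‖w‖ + ‖w'‖) * ‖w - w'‖))
    (hM : 0 ≤ M) (hML : 2 * r * M ≤ L * c) {u h : ℕ → H} {δ : ℕ → ℝ} {ū : H}
    (hsol : ∀ n, h n ∈ K ∧ G (h n) = l - Q (u n)) (hstep : ∀ n, ‖u (n + 1) - h n‖ ≤ δ (n + 1))
    (hur : ∀ n, ‖u n‖ ≤ r) (hū : ū ∈ K) (hūr : ‖ū‖ ≤ r) (hGū : G ū = l - Q ū) (n : ℕ) :
    ‖u (n + 1) - ū‖ ≤ δ (n + 1) + L * ‖u n - ū‖ :=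
  calc ‖u (n + 1) - ū‖ ≤ ‖u (n + 1) - h n‖ + ‖h n - ū‖ := norm_sub_le_norm_sub_add_norm_sub _ _ _
    _ ≤ δ (n + 1) + L * ‖u n - ū‖ := add_le_add (hstep n)
        (norm_sub_le_of_apply_eq_sub hc hcG hQ hM hML (hur n) hūr (hsol n).1 hū (hsol n).2 hGū)

theorem norm_iterate_sub_le_geom (hc : 0 < c) (hcG : ∀ x ∈ K, c * ‖x‖ ≤ ‖G x‖)
    (hQ : ∀ w w', ‖Q w - Q w'‖ ≤ M * ((‖w‖ + ‖w'‖) * ‖w - w'‖)) (hQ0 : Q 0 = 0)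
    (hM : 0 ≤ M) (hML : 2 * r * M ≤ L * c) {a : ℝ} (ha0 : 0 ≤ a) (ha1 : a ≤ 1) (haL : a ≠ L)
    (hL : 0 ≤ L) (hbudget : a + ‖l‖ / c ≤ (1 - L) * r) {u h : ℕ → H} {ū : H}
    (hsol : ∀ n, h n ∈ K ∧ G (h n) = l - Q (u n)) (hstep : ∀ n, ‖u (n + 1) - h n‖ ≤ a ^ (n + 1))
    (hu0 : u 0 = 0) (hū : ū ∈ K) (hūr : ‖ū‖ ≤ r) (hGū : G ū = l - Q ū) (n : ℕ) :
    ‖u n - ū‖ ≤ a * (a ^ n - L ^ n) / (a - L) + L ^ n * r := by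
  have hr : 0 ≤ r := (norm_nonneg ū).trans hūr
  have hur := norm_iterate_le hc hcG hQ hQ0 hM hML hsol hstep (by simpa [hu0] using hr)
    fun n => by linarith [pow_le_of_le_one ha0 ha1 n.add_one_ne_zero, mul_nonneg hL hr]
  exact le_of_le_pow_add_mul (e := fun n => ‖u n - ū‖) haL hL (by simpa [hu0] using hūr)
    (norm_iterate_sub_le hc hcG hQ hM hML hsol hstep hur hū hūr hGū) n

end InexactIteration

theorem fixpt_routine_convergence_general
    {V H : Type*} [NormedAddCommGroup V] [InnerProductSpace ℝ V] [CompleteSpace V]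
    [NormedAddCommGroup H] [InnerProductSpace ℝ H] [CompleteSpace H]
    (B : V →L[ℝ] V) (α : ℝ) (hα : 0 < α)
    (hB : ∀ v : V, α * ‖v‖ ^ 2 ≤ ⟪B v, v⟫)
    (T : H →L[ℝ] V) (hT : Function.Surjective T)
    (G : H →L[ℝ] H) (hG : G = (ContinuousLinearMap.adjoint T).comp (B.comp T))
    (P : H →L[ℝ] H)
    (hP : ∀ x : H, P x ∈ (LinearMap.ker (T : H →ₗ[ℝ] V))ᗮ ∧ x - P x ∈ LinearMap.ker (T : H →ₗ[ℝ] V))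
    (c : ℝ) (hc : 0 < c) (hcG : ∀ x ∈ (LinearMap.ker (T : H →ₗ[ℝ] V))ᗮ, c * ‖x‖ ≤ ‖G x‖)
    (A₁ : V →L[ℝ] V →L[ℝ] V)
    (G₁ : H → H) (hG₁ : ∀ x : H, G₁ x = ContinuousLinearMap.adjoint T (A₁ (T x) (T x)))
    (lbar : H) (hlbar : lbar ∈ LinearMap.range (ContinuousLinearMap.adjoint T : V →ₗ[ℝ] H))
    (rs : ℝ) (hrs : 0 < rs) (hrs' : rs < c / (2 * ‖T‖ ^ 3 * ‖A₁‖))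
    (L : ℝ) (hL : L = 2 * rs * ‖T‖ ^ 3 * ‖A₁‖ / c)
    (ubar : H) (hubar : ubar ∈ (LinearMap.ker (T : H →ₗ[ℝ] V))ᗮ ∧ ‖ubar‖ ≤ rs ∧ G ubar + G₁ ubar = lbar)
    (ε₀ : ℝ) (hε₀0 : 0 < ε₀) (hε₀1 : ε₀ < 1) (hε₀L : ε₀ ≠ L)
    (ε : ℕ → ℝ) (hε0 : ε 0 = ε₀) (hεk : ∀ k : ℕ, 1 ≤ k → ε k = ε₀ ^ k)
    (v : ℕ → H) (hv0 : v 0 = 0)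
    (hstep : ∀ n : ℕ, ∀ h : H, h ∈ (LinearMap.ker (T : H →ₗ[ℝ] V))ᗮ →
      G h = lbar - G₁ (v n) → ‖P (v (n + 1)) - h‖ ≤ ε (n + 1))
    (hE : ∀ n : ℕ,
      (∑ k ∈ Finset.Icc 2 (n + 1), ε k) +
      (1 + L) * (∑ h ∈ Finset.range (n - 2), ∑ k ∈ Finset.Icc 3 (n - h),
        ε k * L ^ (n - h - k)) +
      (ε 1 + L * (ε 0 + ‖lbar‖ / c)) * (∑ k ∈ Finset.range n, L ^ k) +
      ε 0 + ‖lbar‖ / c ≤ rs) :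
    (∀ n : ℕ, ‖P (v (n + 1)) - ubar‖ ≤
      ε₀ * (ε₀ ^ (n + 1) - L ^ (n + 1)) / (ε₀ - L) + L ^ n * rs) ∧
    Tendsto (fun n : ℕ => P (v n)) atTop (𝓝 ubar) := by
  obtain ⟨hL0, hL1⟩ : L ∈ Set.Ioo 0 1 := by
    convert div_mem_Ioo_of_lt_div hc hrs hrs' using 1
    rw [hL]; ring
  have hML : 2 * rs * (‖T‖ ^ 3 * ‖A₁‖) ≤ L * c :=
    le_of_eq (by rw [hL, div_mul_cancel₀ _ hc.ne']; ring)
  have hQ (w w' : H) : ‖G₁ w - G₁ w'‖ ≤ ‖T‖ ^ 3 * ‖A₁‖ * ((‖w‖ + ‖w'‖) * ‖w - w'‖) := by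
    simpa only [hG₁] using T.norm_adjoint_apply_diag_sub_le A₁ w w'
  have hε (k : ℕ) : 0 ≤ ε k := by
    rcases k with _ | k <;> simp [hε0, hεk, hε₀0.le]
  have hbudget : ε₀ + ‖lbar‖ / c ≤ (1 - L) * rs := hε0 ▸ le_one_sub_mul_of_forall_mul_geom_sum_le
    hL0.le hL1 fun n => (mul_geom_sum_le_fixptBudget _ hε hL0.le n).trans (hE n)
  have hG₁P (x : H) : G₁ (P x) = G₁ x := by
    have hTP : T x = T (P x) := sub_eq_zero.1 (by simpa using LinearMap.mem_ker.1 (hP x).2)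
    rw [hG₁, hG₁, hTP]
  have hsolvable (n : ℕ) : ∃ h ∈ (LinearMap.ker (T : H →ₗ[ℝ] V))ᗮ, G h = lbar - G₁ (P (v n)) := by
    obtain ⟨w, rfl⟩ := hlbar
    exact hG ▸ exists_mem_orthogonal_ker_adjoint_comp_apply_eq hα hB hT
      ⟨w - A₁ (T (P (v n))) (T (P (v n))), by simp [hG₁]⟩
  choose h hhK hGh using hsolvable
  have herror := norm_iterate_sub_le_geom hc hcG hQ (by simp [hG₁]) (by positivity) hML
    hε₀0.le hε₀1.le hε₀L hL0.le hbudget (fun n => ⟨hhK n, hGh n⟩)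
    (fun n => hεk _ n.succ_pos ▸ hstep n (h n) (hhK n) (by rw [hGh n, hG₁P]))
    (by simp [hv0]) hubar.1 hubar.2.1 (eq_sub_of_add_eq hubar.2.2)
  refine ⟨fun n => (herror (n + 1)).trans ?_, ?_⟩
  · exact add_le_add le_rfl
      (mul_le_mul_of_nonneg_right (pow_le_pow_of_le_one hL0.le hL1.le n.le_succ) hrs.le)
  · exact tendsto_iff_norm_sub_tendsto_zero.2 <| squeeze_zero (fun _ => norm_nonneg _) herror
      (tendsto_geom_error_bound rs hε₀0.le hε₀1 hL0.le hL1)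

/-- Convergence of the adaptive routine FIXPT: the projected inexact fixed point
iterates `P v_n` satisfy the error estimate
`‖P v_{n+1} − ū‖ ≤ ε₀(ε₀^{n+1} − L^{n+1})/(ε₀ − L) + Lⁿ r*` and converge to the
unique solution `ū` of the discrete nonlinear problem. -/
theorem fixpt_routine_convergence
    {V H : Type*} [NormedAddCommGroup V] [InnerProductSpace ℝ V] [CompleteSpace V]
    [NormedAddCommGroup H] [InnerProductSpace ℝ H] [CompleteSpace H]
    (B : V →L[ℝ] V) (α : ℝ) (hα : 0 < α)
    (hB : ∀ v : V, α * ‖v‖ ^ 2 ≤ ⟪B v, v⟫)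
    (T : H →L[ℝ] V) (hT : Function.Surjective T)
    (G : H →L[ℝ] H) (hG : G = (ContinuousLinearMap.adjoint T).comp (B.comp T))
    (P : H →L[ℝ] H)
    (hP : ∀ x : H, P x ∈ (LinearMap.ker (T : H →ₗ[ℝ] V))ᗮ ∧ x - P x ∈ LinearMap.ker (T : H →ₗ[ℝ] V))
    (c : ℝ) (hc : 0 < c) (hcG : ∀ x ∈ (LinearMap.ker (T : H →ₗ[ℝ] V))ᗮ, c * ‖x‖ ≤ ‖G x‖)
    (A₁ : V →L[ℝ] V →L[ℝ] V) (hA₁ : ‖A₁‖ ≠ 0)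
    (G₁ : H → H) (hG₁ : ∀ x : H, G₁ x = ContinuousLinearMap.adjoint T (A₁ (T x) (T x)))
    (lbar : H) (hlbar : lbar ∈ LinearMap.range (ContinuousLinearMap.adjoint T : V →ₗ[ℝ] H))
    (hl : ‖lbar‖ < c ^ 2 / (4 * ‖T‖ ^ 3 * ‖A₁‖))
    (rs : ℝ) (hrs : 0 < rs) (hrs' : rs < c / (2 * ‖T‖ ^ 3 * ‖A₁‖))
    (L : ℝ) (hL : L = 2 * rs * ‖T‖ ^ 3 * ‖A₁‖ / c)
    (ubar : H) (hubar : ubar ∈ (LinearMap.ker (T : H →ₗ[ℝ] V))ᗮ ∧ ‖ubar‖ ≤ rs ∧ G ubar + G₁ ubar = lbar)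
    (hunique : ∀ u : H,
      u ∈ (LinearMap.ker (T : H →ₗ[ℝ] V))ᗮ → ‖u‖ ≤ rs → G u + G₁ u = lbar → u = ubar)
    (ε₀ : ℝ) (hε₀0 : 0 < ε₀) (hε₀r : ε₀ < rs) (hε₀1 : ε₀ < 1) (hε₀L : ε₀ ≠ L)
    (ε : ℕ → ℝ) (hε0 : ε 0 = ε₀) (hεk : ∀ k : ℕ, 1 ≤ k → ε k = ε₀ ^ k)
    (v : ℕ → H) (hv0 : v 0 = 0)
    (hstep : ∀ n : ℕ, ∀ h : H, h ∈ (LinearMap.ker (T : H →ₗ[ℝ] V))ᗮ →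
      G h = lbar - G₁ (v n) → ‖P (v (n + 1)) - h‖ ≤ ε (n + 1))
    (hE : ∀ n : ℕ,
      (∑ k ∈ Finset.Icc 2 (n + 1), ε k) +
      (1 + L) * (∑ h ∈ Finset.range (n - 2), ∑ k ∈ Finset.Icc 3 (n - h),
        ε k * L ^ (n - h - k)) +
      (ε 1 + L * (ε 0 + ‖lbar‖ / c)) * (∑ k ∈ Finset.range n, L ^ k) +
      ε 0 + ‖lbar‖ / c ≤ rs) :
    (∀ n : ℕ, ‖P (v (n + 1)) - ubar‖ ≤
      ε₀ * (ε₀ ^ (n + 1) - L ^ (n + 1)) / (ε₀ - L) + L ^ n * rs) ∧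
    Tendsto (fun n : ℕ => P (v n)) atTop (𝓝 ubar) :=
  fixpt_routine_convergence_general B α hα hB T hT G hG P hP c hc hcG A₁ G₁ hG₁ lbar hlbar rs hrs
    hrs' L hL ubar hubar ε₀ hε₀0 hε₀1 hε₀L ε hε0 hεk v hv0 hstep hE
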